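/- arXiv:1412.5694 — 4 statements merged into one kernel-verified Lean document; each statement's English description precedes it below -/
import Mathlib

section
/- Let f(x) = λ(1 + e^{-η} - e^{-ηx}) with λ(x) = Σ_{i=2}^D λ_i x^{i-1}, λ_i ≥ 0, Σλ_i = 1, η > 0. If f'(1) > 1, then there exists x* ∈ (0,1) with f(x*) = x*. -/
/-- If f'(1) > 1 for the density evolution map f(x) = λ(1 + e^{-η} - e^{-ηx}),
then f has a fixed point in (0,1). -/
theorem density_evolution_second_fixed_point (D : ℕ) (hD : 2 ≤ D) (η : ℝ) (hη : 0 < η)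
    (lam : ℕ → ℝ) (hnonneg : ∀ i ∈ Finset.Icc 2 D, 0 ≤ lam i)
    (hsum : ∑ i ∈ Finset.Icc 2 D, lam i = 1)
    (f : ℝ → ℝ)
    (hf : ∀ x, f x = ∑ i ∈ Finset.Icc 2 D,
      lam i * (1 + Real.exp (-η) - Real.exp (-η * x)) ^ (i - 1))
    (hderiv : 1 < deriv f 1) :
    ∃ x ∈ Set.Ioo (0 : ℝ) 1, f x = x := by
  obtain rfl : f = fun x => ∑ i ∈ Finset.Icc 2 D,
      lam i * (1 + Real.exp (-η) - Real.exp (-η * x)) ^ (i - 1) := funext hf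
  set F : ℝ → ℝ := fun x => ∑ i ∈ Finset.Icc 2 D,
      lam i * (1 + Real.exp (-η) - Real.exp (-η * x)) ^ (i - 1) with hF
  have hcont : Continuous F := by fun_prop
  have hdiff : Differentiable ℝ F := by fun_prop
  have hF1 : F 1 = 1 := by
    simp only [hF, mul_one, sub_self, add_sub_cancel_right, one_pow]
    simpa using hsum
  have hr0 : (0:ℝ) < Real.exp (-η) := Real.exp_pos _
  have hr1 : Real.exp (-η) < 1 := Real.exp_lt_one_iff.mpr (by linarith)
  have hF0 : 0 < F 0 := by
    have hb : Real.exp (-η) ^ (D - 1) ≤ F 0 := by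
      have : ∀ i ∈ Finset.Icc 2 D,
          lam i * Real.exp (-η) ^ (D - 1) ≤
            lam i * (1 + Real.exp (-η) - Real.exp (-η * 0)) ^ (i - 1) := by
        intro i hi
        have hiD : i - 1 ≤ D - 1 := by
          have := (Finset.mem_Icc.mp hi).2; omega
        have : Real.exp (-η) ^ (D - 1) ≤ Real.exp (-η) ^ (i - 1) :=
          pow_le_pow_of_le_one hr0.le hr1.le hiD
        have h0 : (1 + Real.exp (-η) - Real.exp (-η * 0)) = Real.exp (-η) := by
          simp
        rw [h0]
        exact mul_le_mul_of_nonneg_left this (hnonneg i hi)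
      calc Real.exp (-η) ^ (D - 1)
          = ∑ i ∈ Finset.Icc 2 D, lam i * Real.exp (-η) ^ (D - 1) := by
            rw [← Finset.sum_mul, hsum, one_mul]
        _ ≤ F 0 := Finset.sum_le_sum this
    exact lt_of_lt_of_le (pow_pos hr0 _) hb
  -- find x₀ ∈ (0,1) with F x₀ < x₀
  have hslope : Filter.Tendsto (slope F 1) (nhdsWithin 1 (Set.Iio 1)) (nhds (deriv F 1)) := by
    have h := hasDerivAt_iff_tendsto_slope.mp (hdiff 1).hasDerivAt
    exact h.mono_left (nhdsWithin_mono _ (by intro x hx; simp at hx ⊢; exact ne_of_lt hx))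
  have hev : ∀ᶠ x in nhdsWithin 1 (Set.Iio 1), 1 < slope F 1 x :=
    hslope.eventually (eventually_gt_nhds hderiv)
  have hev2 : ∀ᶠ x in nhdsWithin 1 (Set.Iio 1), x ∈ Set.Ioo (0:ℝ) 1 := by
    filter_upwards [self_mem_nhdsWithin,
      eventually_nhdsWithin_of_eventually_nhds (eventually_gt_nhds (by norm_num : (0:ℝ) < 1))]
      with x hx1 hx0
    exact ⟨hx0, hx1⟩
  obtain ⟨x₀, hs, hx₀⟩ := (hev.and hev2).exists
  have hx₀1 : x₀ < 1 := hx₀.2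
  have hFx₀ : F x₀ < x₀ := by
    have : slope F 1 x₀ = (F x₀ - 1) / (x₀ - 1) := by
      rw [slope_def_field, hF1]
    rw [this] at hs
    have hneg : x₀ - 1 < 0 := by linarith
    have := (lt_div_iff_of_neg hneg).mp hs
    linarith
  -- IVT on g = F - id
  have hgcont : ContinuousOn (fun x => F x - x) (Set.Icc 0 x₀) :=
    (hcont.sub continuous_id).continuousOn
  have h0 : (0:ℝ) ∈ Set.Ioo (F x₀ - x₀) (F 0 - 0) := by
    constructor <;> simp <;> linarith
  obtain ⟨x, hx, hxeq⟩ := intermediate_value_Ioo' (le_of_lt hx₀.1) hgcont h0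
  refine ⟨x, ⟨hx.1, lt_trans hx.2 hx₀1⟩, by linarith [sub_eq_zero.mp hxeq]⟩
end

section
/- Let 0 < ε < 1 and suppose D ≥ (e/(1-ε))^{2/ε} and D ≥ 2/ε. Then with η = h(D-1)·(D/(D-1))·(1-ε), one has η e^{-η} · (D-1)/h(D-1) ≥ ((1-ε)/e) · D^{ε/2} ≥ 1. -/
/-- Harmonic sum h(n) = Σ_{i=1}^n 1/i. -/
noncomputable def harmonicSum (n : ℕ) : ℝ := ∑ i ∈ Finset.Icc 1 n, (1 : ℝ) / i

/-!
Since `η / h(D-1) · (D-1) = D(1-ε)`, the middle quantity is `(1-ε) D e^{-η}`. With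
`c = (D/(D-1))(1-ε)` and `h(D-1) ≤ 1 + log D` we get `η ≤ c + c log D`, and `D ≥ 2/ε` gives
`c ≤ 1 - ε/2 ≤ 1`, so `η ≤ 1 + (1-ε/2) log D` and `D e^{-η} ≥ D^{ε/2}/e`. The last inequality is
`D ≥ (e/(1-ε))^{2/ε}` with both sides raised to the power `ε/2`.
-/

open Real

lemma harmonicSum_eq_harmonic (n : ℕ) : harmonicSum n = harmonic n := by
  simp [harmonicSum, harmonic_eq_sum_Icc]

lemma harmonicSum_pos {n : ℕ} (hn : n ≠ 0) : 0 < harmonicSum n := by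
  rw [harmonicSum_eq_harmonic]
  exact_mod_cast harmonic_pos hn

lemma harmonicSum_mono : Monotone harmonicSum := fun _ _ hmn ↦
  Finset.sum_le_sum_of_subset_of_nonneg (Finset.Icc_subset_Icc_right hmn)
    fun _ _ _ ↦ by positivity

lemma harmonicSum_le_one_add_log (n : ℕ) : harmonicSum n ≤ 1 + log n := by
  rw [harmonicSum_eq_harmonic]
  exact harmonic_le_one_add_log n

lemma div_sub_one_mul_one_sub_le {d ε : ℝ} (hε : 0 < ε) (hd : 1 < d) (hεd : 2 ≤ ε * d) :
    d / (d - 1) * (1 - ε) ≤ 1 - ε / 2 := by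
  rw [div_mul_eq_mul_div, div_le_iff₀ (by linarith)]
  nlinarith

lemma rpow_div_exp_one_eq {d : ℝ} (hd : 0 < d) (s : ℝ) :
    d ^ s / exp 1 = d * exp (-(1 + (1 - s) * log d)) := by
  conv_rhs => arg 1; rw [← exp_log hd]
  rw [rpow_def_of_pos hd, ← exp_sub, ← exp_add]
  ring_nf

lemma le_rpow_of_rpow_inv_le {b d p : ℝ} (hb : 0 ≤ b) (hp : 0 < p) (h : b ^ p⁻¹ ≤ d) :
    b ≤ d ^ p := by
  have hd : 0 ≤ d := (rpow_nonneg hb _).trans h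
  simpa using (le_rpow_inv_iff_of_pos hb hd (inv_pos.mpr hp)).mpr h

/-- Stability condition: if D ≥ (e/(1-ε))^{2/ε} and D ≥ 2/ε, then with
η = h(D-1)·(D/(D-1))·(1-ε) one has
η e^{-η} (D-1)/h(D-1) ≥ ((1-ε)/e) D^{ε/2} ≥ 1. -/
theorem stability_condition (D : ℕ) (ε : ℝ) (hε : 0 < ε) (hε1 : ε < 1)
    (hD1 : (Real.exp 1 / (1 - ε)) ^ ((2 : ℝ) / ε) ≤ (D : ℝ))
    (hD2 : 2 / ε ≤ (D : ℝ))
    (η : ℝ)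
    (hη : η = harmonicSum (D - 1) * ((D : ℝ) / ((D : ℝ) - 1)) * (1 - ε)) :
    ((1 - ε) / Real.exp 1) * (D : ℝ) ^ (ε / 2)
        ≤ η * Real.exp (-η) * (((D : ℝ) - 1) / harmonicSum (D - 1))
    ∧ (1 : ℝ) ≤ ((1 - ε) / Real.exp 1) * (D : ℝ) ^ (ε / 2) := by
  have hεD : 2 ≤ ε * D := (div_le_iff₀' hε).mp hD2
  have hD : (1 : ℝ) < D := by nlinarith
  have hD0 : D - 1 ≠ 0 := by
    have : 1 < D := by exact_mod_cast hD
    omega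
  have hh_pos := harmonicSum_pos hD0
  have hh_le : harmonicSum (D - 1) ≤ 1 + log D :=
    (harmonicSum_mono (Nat.sub_le D 1)).trans (harmonicSum_le_one_add_log D)
  have hc := div_sub_one_mul_one_sub_le hε hD hεD
  have hc_pos : 0 ≤ (D : ℝ) / (D - 1) * (1 - ε) :=
    mul_nonneg (div_nonneg (by linarith) (by linarith)) (by linarith)
  have hlog : 0 ≤ log D := log_nonneg hD.le
  have hη_le : η ≤ 1 + (1 - ε / 2) * log D := by
    rw [hη, mul_assoc]
    nlinarith [mul_le_mul_of_nonneg_right hh_le hc_pos]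
  have hmiddle : η * exp (-η) * ((D - 1) / harmonicSum (D - 1)) = (1 - ε) * (D * exp (-η)) := by
    rw [hη]
    field_simp [(by linarith : (D : ℝ) - 1 ≠ 0)]
  constructor
  · rw [hmiddle, div_mul_eq_mul_div, mul_div_assoc, rpow_div_exp_one_eq (by linarith)]
    gcongr
  · have hbase : exp 1 / (1 - ε) ≤ (D : ℝ) ^ (ε / 2) :=
      le_rpow_of_rpow_inv_le (by have := exp_pos 1; bound) (by positivity) (by simpa using hD1)
    rw [div_mul_eq_mul_div, le_div_iff₀ (exp_pos 1), one_mul]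
    rwa [div_le_iff₀' (by linarith)] at hbase
end

section
/- Finite-time convergence: let f : ℝ → ℝ and suppose γ := min over p ∈ [p*+ε₁, 1-δ] of (p - f(p)) satisfies γ > 0, with p* ≤ f(p) for p in [p*, 1]. Then the sequence p_1 = 1-δ, p_{j+1} = f(p_j) satisfies p_ℓ ≤ p* + ε₁ for some ℓ ≤ ⌈(1 - p*)/γ⌉. -/
/-!
While the orbit stays above `p* + ε₁` it loses at least `γ` per step and, since `f` maps
`[p*, 1]` into itself, never falls below `p*`; so it cannot stay above `p* + ε₁` for
`⌈(1 - p*) / γ⌉` steps starting from `1 - δ < 1`.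
-/

open Set

theorem iterate_mem_Icc_sub {f : ℝ → ℝ} {c lo hi γ x₀ : ℝ} (hγ : 0 ≤ γ)
    (hstep : ∀ x ∈ Icc lo hi, c < x → f x ∈ Icc lo (x - γ)) (hx₀ : x₀ ∈ Icc lo hi) :
    ∀ n : ℕ, (∀ i < n, c < f^[i] x₀) → f^[n] x₀ ∈ Icc lo (x₀ - n * γ)
  | 0, _ => by simpa using hx₀.1
  | n + 1, habove => by
    have ih := iterate_mem_Icc_sub hγ hstep hx₀ n fun i hin => habove i (by omega)
    have hle_hi : f^[n] x₀ ≤ hi := by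
      linarith [ih.2, hx₀.2, mul_nonneg n.cast_nonneg hγ]
    have hnext := hstep _ ⟨ih.1, hle_hi⟩ (habove n n.lt_succ_self)
    rw [Function.iterate_succ_apply']
    exact ⟨hnext.1, by push_cast; linarith [hnext.2, ih.2]⟩

theorem exists_lt_iterate_le {f : ℝ → ℝ} {c lo hi γ x₀ : ℝ} {n : ℕ} (hγ : 0 ≤ γ)
    (hstep : ∀ x ∈ Icc lo hi, c < x → f x ∈ Icc lo (x - γ)) (hx₀ : x₀ ∈ Icc lo hi)
    (hn : x₀ - lo < n * γ) : ∃ j < n, f^[j] x₀ ≤ c := by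
  by_contra! habove
  obtain ⟨hlo, hdesc⟩ := iterate_mem_Icc_sub hγ hstep hx₀ n habove
  linarith

theorem add_eq_iterate_of_succ_eq {α : Type*} {f : α → α} {u : ℕ → α} {k : ℕ}
    (hu : ∀ j, k ≤ j → u (j + 1) = f (u j)) : ∀ j, u (k + j) = f^[j] (u k)
  | 0 => rfl
  | j + 1 => by
    rw [Function.iterate_succ_apply', ← add_eq_iterate_of_succ_eq hu j, ← add_assoc,
      hu _ (Nat.le_add_right k j)]

theorem density_evolution_finite_time_general (f : ℝ → ℝ)
    (pstar ε₁ δ γ : ℝ) (hε₁ : 0 < ε₁)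
    (horder : pstar + ε₁ < 1 - δ) (hδ : 0 < δ)
    (hγ : 0 < γ)
    (hdec : ∀ q ∈ Set.Icc (pstar + ε₁) (1 - δ), γ ≤ q - f q)
    (hmap : ∀ q ∈ Set.Icc pstar 1, f q ∈ Set.Icc pstar 1)
    (p : ℕ → ℝ) (hp_init : p 1 = 1 - δ)
    (hp_rec : ∀ j, 1 ≤ j → p (j + 1) = f (p j)) :
    ∃ ℓ : ℕ, 1 ≤ ℓ ∧ ℓ ≤ ⌈(1 - pstar) / γ⌉₊ ∧ p ℓ ≤ pstar + ε₁ := by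
  set N := ⌈(1 - pstar) / γ⌉₊
  have hN : 1 - pstar ≤ N * γ := (div_le_iff₀ hγ).1 (Nat.le_ceil _)
  have hstep : ∀ x ∈ Icc pstar (1 - δ), pstar + ε₁ < x → f x ∈ Icc pstar (x - γ) :=
    fun x hx hcx => ⟨(hmap x ⟨hx.1, by linarith [hx.2]⟩).1,
      by linarith [hdec x ⟨hcx.le, hx.2⟩]⟩
  have hstart : 1 - δ ∈ Icc pstar (1 - δ) := ⟨by linarith, le_rfl⟩
  obtain ⟨j, hjN, hj⟩ := exists_lt_iterate_le (n := N) hγ.le hstep hstart (by linarith)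
  refine ⟨1 + j, by omega, by omega, ?_⟩
  rwa [add_eq_iterate_of_succ_eq hp_rec, hp_init]

/-- Finite-time convergence: if p - f(p) ≥ γ > 0 for p ∈ [p*+ε₁, 1-δ] and
f maps [p*,1] into [p*,1], then the sequence p₁ = 1-δ, p_{j+1} = f(p_j)
satisfies p_ℓ ≤ p* + ε₁ for some ℓ ≤ ⌈(1 - p*)/γ⌉. -/
theorem density_evolution_finite_time (f : ℝ → ℝ)
    (pstar ε₁ δ γ : ℝ) (hp0 : 0 ≤ pstar) (hε₁ : 0 < ε₁)
    (horder : pstar + ε₁ < 1 - δ) (hδ : 0 < δ)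
    (hγ : 0 < γ)
    (hdec : ∀ q ∈ Set.Icc (pstar + ε₁) (1 - δ), γ ≤ q - f q)
    (hmap : ∀ q ∈ Set.Icc pstar 1, f q ∈ Set.Icc pstar 1)
    (p : ℕ → ℝ) (hp_init : p 1 = 1 - δ)
    (hp_rec : ∀ j, 1 ≤ j → p (j + 1) = f (p j)) :
    ∃ ℓ : ℕ, 1 ≤ ℓ ∧ ℓ ≤ ⌈(1 - pstar) / γ⌉₊ ∧ p ℓ ≤ pstar + ε₁ :=
  density_evolution_finite_time_general f pstar ε₁ δ γ hε₁ horder hδ hγ hdec hmap p hp_init hp_rec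
end

section
/- Recovery of a signal from one reference coordinate: let z ∈ ℂ^m with z₁ ≠ 0. Then the vector z is determined up to a global unimodular phase by the 3m - 2 real numbers |z_ℓ| (1 ≤ ℓ ≤ m), |z₁ + z_ℓ| (2 ≤ ℓ ≤ m), and |z₁ + i z_ℓ| (2 ≤ ℓ ≤ m). That is, if w ∈ ℂ^m with w₁ ≠ 0 gives the same values of all these magnitudes, then there exists c ∈ ℂ with |c| = 1 such that w = c·z. -/
/-!
The inner product `⟪a, b⟫ = conj a * b` is recovered from norms by polarization: its real part
from `‖a‖`, `‖b‖`, `‖a + b‖`, and its imaginary part, which is `-re ⟪a, I • b⟫`, from `‖a‖`,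
`‖b‖`, `‖a + I • b‖`. Hence `conj w₁ * w_ℓ = conj z₁ * z_ℓ` for every `ℓ`, and dividing by
`conj z₁ ≠ 0` (using `|w₁| = |z₁|`) gives `w_ℓ = (w₁ / z₁) * z_ℓ`.
-/

open Complex ComplexConjugate

section Polarization

variable {E F : Type*} [NormedAddCommGroup E] [InnerProductSpace ℂ E]
  [NormedAddCommGroup F] [InnerProductSpace ℂ F]

theorem re_inner_eq_of_norm_eq {x y : E} {x' y' : F} (hx : ‖x‖ = ‖x'‖) (hy : ‖y‖ = ‖y'‖)
    (hadd : ‖x + y‖ = ‖x' + y'‖) : (inner ℂ x y).re = (inner ℂ x' y').re := by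
  rw [← RCLike.re_to_complex, ← RCLike.re_to_complex,
    re_inner_eq_norm_add_mul_self_sub_norm_mul_self_sub_norm_mul_self_div_two,
    re_inner_eq_norm_add_mul_self_sub_norm_mul_self_sub_norm_mul_self_div_two, hx, hy, hadd]

theorem im_inner_eq_neg_re_inner_I_smul (x y : E) :
    (inner ℂ x y).im = -(inner ℂ x (I • y)).re := by
  rw [inner_smul_right, mul_re, I_re, I_im]
  ring

theorem inner_eq_of_norm_eq {x y : E} {x' y' : F} (hx : ‖x‖ = ‖x'‖) (hy : ‖y‖ = ‖y'‖)
    (hadd : ‖x + y‖ = ‖x' + y'‖) (hI : ‖x + I • y‖ = ‖x' + I • y'‖) :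
    inner ℂ x y = inner ℂ x' y' := by
  apply Complex.ext
  · exact re_inner_eq_of_norm_eq hx hy hadd
  · rw [im_inner_eq_neg_re_inner_I_smul, im_inner_eq_neg_re_inner_I_smul,
      re_inner_eq_of_norm_eq hx (by simp [norm_smul, hy]) hI]

end Polarization

theorem eq_div_mul_of_conj_mul_eq {a b a' b' : ℂ} (ha' : a' ≠ 0) (ha : ‖a‖ = ‖a'‖)
    (h : conj a * b = conj a' * b') : b = a / a' * b' := by
  have hsq : conj a * a = conj a' * a' := by
    rw [conj_mul', conj_mul', ha]
  rw [div_mul_eq_mul_div, eq_div_iff ha']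
  apply mul_right_cancel₀ ((map_ne_zero conj).mpr ha')
  calc b * a' * conj a' = b * (conj a * a) := by rw [hsq]; ring
    _ = a * (conj a' * b') := by rw [← h]; ring
    _ = a * b' * conj a' := by ring

theorem recovery_up_to_global_phase_general (m : ℕ) (z w : Fin (m + 1) → ℂ)
    (hz : z 0 ≠ 0)
    (habs : ∀ ℓ, ‖w ℓ‖ = ‖z ℓ‖)
    (hsum : ∀ ℓ, ℓ ≠ 0 → ‖w 0 + w ℓ‖ = ‖z 0 + z ℓ‖)
    (hisum : ∀ ℓ, ℓ ≠ 0 →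
      ‖w 0 + Complex.I * w ℓ‖ = ‖z 0 + Complex.I * z ℓ‖) :
    ∃ c : ℂ, ‖c‖ = 1 ∧ ∀ ℓ, w ℓ = c * z ℓ := by
  have hcross : ∀ ℓ, conj (w 0) * w ℓ = conj (z 0) * z ℓ := by
    intro ℓ
    rcases eq_or_ne ℓ 0 with rfl | hℓ
    · rw [conj_mul', conj_mul', habs 0]
    · simpa only [RCLike.inner_apply', smul_eq_mul] using
        inner_eq_of_norm_eq (habs 0) (habs ℓ) (hsum ℓ hℓ) (hisum ℓ hℓ)
  refine ⟨w 0 / z 0, ?_, fun ℓ => eq_div_mul_of_conj_mul_eq hz (habs 0) (hcross ℓ)⟩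
  rw [norm_div, habs 0, div_self (norm_ne_zero_iff.mpr hz)]

/-- Recovery of a signal up to global phase from one reference coordinate:
if z, w ∈ ℂ^m have nonzero first coordinates and agree on all magnitudes
|z_ℓ|, |z₁ + z_ℓ|, |z₁ + i z_ℓ|, then w = c·z for some unimodular c. -/
theorem recovery_up_to_global_phase (m : ℕ) (z w : Fin (m + 1) → ℂ)
    (hz : z 0 ≠ 0) (hw : w 0 ≠ 0)
    (habs : ∀ ℓ, ‖w ℓ‖ = ‖z ℓ‖)
    (hsum : ∀ ℓ, ℓ ≠ 0 → ‖w 0 + w ℓ‖ = ‖z 0 + z ℓ‖)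
    (hisum : ∀ ℓ, ℓ ≠ 0 →
      ‖w 0 + Complex.I * w ℓ‖ = ‖z 0 + Complex.I * z ℓ‖) :
    ∃ c : ℂ, ‖c‖ = 1 ∧ ∀ ℓ, w ℓ = c * z ℓ :=
  recovery_up_to_global_phase_general m z w hz habs hsum hisum
end
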